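/- For all n ≥ 0, the number of (2,5)-regular partitions of 4n+2 into distinct parts is even, i.e., a_{2,5}(4n+2) ≡ 0 (mod 2). -/

import Mathlib

/-- Number of (r,s)-regular partitions of n into distinct parts: partitions of n
with pairwise distinct parts, none of which is divisible by r or by s. -/
noncomputable def ars (r s n : ℕ) : ℕ :=
  Nat.card {p : n.Partition // p.parts.Nodup ∧ ∀ x ∈ p.parts, ¬ r ∣ x ∧ ¬ s ∣ x}

/-!
A set of distinct parts prime to 10 is read as two Maya diagrams: parts `10a + 1` and `10b + 9`
are a particle at site `a` and a hole at site `-1 - b` of the first diagram, parts `10a + 3` and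
`10b + 7` the same for the second. With energies `E₁, E₂` and charges `c₁, c₂`, the partitioned
number is `10 (E₁ + E₂) + c₁ + 3 c₂`. Translating a diagram by one site raises its charge by one
and keeps its excess `2E - c (c - 1)` over the ground state of its charge (the combinatorial
content of the Jacobi triple product). Translating each diagram to the charge of the other
exchanges the two excesses and keeps both charges and `E₁ + E₂`: an involution on the partitions
of a fixed number. At a fixed point the excesses agree, and then the number is `≡ c₁² - c₂²`
(mod 4), never `2`; so for `4n + 2` the partitions come in pairs.
-/

open Finset

theorem Equiv.Perm.map_zpow_apply_of_map_apply {α : Type*} (f : Equiv.Perm α) (φ : α → ℤ) (t : ℤ)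
    (h : ∀ a, φ (f a) = φ a + t) (j : ℤ) (a : α) : φ ((f ^ j) a) = φ a + j * t := by
  induction j using Int.induction_on generalizing a with
  | zero => simp
  | succ k ih => rw [zpow_add_one, Equiv.Perm.mul_apply, ih, h]; ring
  | pred k ih =>
    have := h (f⁻¹ a)
    rw [zpow_sub_one, Equiv.Perm.mul_apply, ih]
    simp only [Equiv.Perm.coe_inv, Equiv.apply_symm_apply] at this ⊢
    linarith

theorem Function.Involutive.even_natCard {α : Type*} {f : α → α} (hf : Function.Involutive f)
    (hfix : ∀ a, f a ≠ a) : Even (Nat.card α) := by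
  cases finite_or_infinite α
  · have := Fintype.ofFinite α
    rw [Nat.card_eq_fintype_card, ← ZMod.natCast_eq_zero_iff_even, Fintype.card,
      card_eq_sum_ones, Nat.cast_sum, Nat.cast_one]
    exact sum_ninvolution f (fun _ => by decide) (fun a _ => hfix a) (fun _ => mem_univ _) hf
  · simp

def distinctPartitionEquiv (P : ℕ → Prop) (hP : ¬ P 0) (n : ℕ) :
    {p : n.Partition // p.parts.Nodup ∧ ∀ x ∈ p.parts, P x} ≃
      {s : Finset ℕ // (∀ x ∈ s, P x) ∧ ∑ x ∈ s, x = n} where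
  toFun p := ⟨⟨p.1.parts, p.2.1⟩, p.2.2, by simpa using p.1.parts_sum⟩
  invFun s := ⟨⟨s.1.1, fun {i} hi => Nat.pos_of_ne_zero (by rintro rfl; exact hP (s.2.1 0 hi)),
    by simpa using s.2.2⟩, s.1.2, s.2.1⟩
  left_inv _ := rfl
  right_inv _ := rfl

lemma injOn_sub_one {s : Finset ℕ} (h : 0 ∉ s) : Set.InjOn (· - 1) (s : Set ℕ) := by
  intro a ha b hb hab
  have : a ≠ 0 := by rintro rfl; exact h ha
  have : b ≠ 0 := by rintro rfl; exact h hb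
  simp only at hab
  omega

lemma card_image_sub_one {s : Finset ℕ} (h : 0 ∉ s) : #(s.image (· - 1)) = #s :=
  card_image_of_injOn (injOn_sub_one h)

lemma sum_image_sub_one {s : Finset ℕ} (h : 0 ∉ s) :
    ∑ y ∈ s.image (fun y : ℕ => y - 1), ((y : ℤ) + 1) = ∑ y ∈ s, (y : ℤ) := by
  rw [sum_image (injOn_sub_one h)]
  refine sum_congr rfl fun y hy => ?_
  have : y ≠ 0 := by rintro rfl; exact h hy
  omega

lemma card_image_add_one (s : Finset ℕ) : #(s.image (· + 1)) = #s :=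
  card_image_of_injective s (add_left_injective 1)

lemma sum_image_add_one (s : Finset ℕ) :
    ∑ x ∈ s.image (fun x : ℕ => x + 1), (x : ℤ) = ∑ x ∈ s, (x : ℤ) + #s := by
  rw [sum_image (fun a _ b _ hab => by simpa using hab)]
  simp [sum_add_distrib]

/-- `p.1` is the set of occupied sites among `0, 1, 2, …` and `p.2` the set of empty sites
among `-1, -2, …`, an element `y` of `p.2` standing for the site `-1 - y`. -/
abbrev MayaDiagram := Finset ℕ × Finset ℕ

namespace MayaDiagram

def charge (p : MayaDiagram) : ℤ := #p.1 - #p.2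

def energy (p : MayaDiagram) : ℤ := ∑ x ∈ p.1, (x : ℤ) + ∑ y ∈ p.2, ((y : ℤ) + 1)

/-- The ground state of charge `c` has energy `c (c - 1) / 2`. -/
def excess (p : MayaDiagram) : ℤ := 2 * energy p - charge p * (charge p - 1)

/-- Translation of the diagram by one site to the right. -/
def shift (p : MayaDiagram) : MayaDiagram :=
  if 0 ∈ p.2 then (p.1.image (· + 1), (p.2.erase 0).image (· - 1))
  else (insert 0 (p.1.image (· + 1)), p.2.image (· - 1))

/-- `swap` is particle-hole conjugation, a reflection of the sites in `-1/2`; so `swap ∘ shift`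
is a reflection as well, hence an involution. -/
lemma shift_swap_shift (p : MayaDiagram) : shift (shift p).swap = p.swap := by
  obtain ⟨X, Y⟩ := p
  by_cases h : 0 ∈ Y <;> ext x <;> simp [shift, h] <;> grind

lemma charge_shift (p : MayaDiagram) : charge (shift p) = charge p + 1 := by
  obtain ⟨X, Y⟩ := p
  by_cases h : 0 ∈ Y
  · have := card_erase_of_mem h
    have := card_pos.2 ⟨0, h⟩
    simp only [shift, h, if_true, charge, card_image_add_one,
      card_image_sub_one (notMem_erase 0 Y)]
    omega
  · simp only [shift, h, if_false, charge, card_insert_of_notMem (by simp : 0 ∉ X.image (· + 1)),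
      card_image_add_one, card_image_sub_one h]
    push_cast
    ring

lemma energy_shift (p : MayaDiagram) : energy (shift p) = energy p + charge p := by
  obtain ⟨X, Y⟩ := p
  have hX := sum_image_add_one X
  by_cases h : 0 ∈ Y
  · have hY : ∑ y ∈ Y.erase 0, (y : ℤ) = ∑ y ∈ Y, (y : ℤ) := sum_erase _ (by simp)
    simp only [shift, h, if_true, energy, charge, sum_image_sub_one (notMem_erase 0 Y), hX, hY]
    push_cast [sum_add_distrib, sum_const, nsmul_eq_mul, mul_one, card_erase_of_mem h]
    ring
  · simp only [shift, h, if_false, energy, charge, sum_insert (by simp : 0 ∉ X.image (· + 1)),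
      sum_image_sub_one h, hX]
    push_cast [sum_add_distrib, sum_const, nsmul_eq_mul, mul_one]
    ring

lemma excess_shift (p : MayaDiagram) : excess (shift p) = excess p := by
  rw [excess, excess, energy_shift, charge_shift]
  ring

def shiftPerm : Equiv.Perm MayaDiagram where
  toFun := shift
  invFun p := (shift p.swap).swap
  left_inv p := by simp only [shift_swap_shift, Prod.swap_swap]
  right_inv p := by simpa using shift_swap_shift p.swap

lemma charge_zpow_shiftPerm (j : ℤ) (p : MayaDiagram) :
    charge ((shiftPerm ^ j) p) = charge p + j := by
  simpa using shiftPerm.map_zpow_apply_of_map_apply charge 1 charge_shift j p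

lemma excess_zpow_shiftPerm (j : ℤ) (p : MayaDiagram) :
    excess ((shiftPerm ^ j) p) = excess p := by
  simpa using shiftPerm.map_zpow_apply_of_map_apply excess 0
    (fun p => by rw [add_zero]; exact excess_shift p) j p

def exchange (x : MayaDiagram × MayaDiagram) : MayaDiagram × MayaDiagram :=
  ((shiftPerm ^ (charge x.1 - charge x.2)) x.2, (shiftPerm ^ (charge x.2 - charge x.1)) x.1)

lemma charge_exchange_fst (x : MayaDiagram × MayaDiagram) :
    charge (exchange x).1 = charge x.1 := by
  simp [exchange, charge_zpow_shiftPerm]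

lemma charge_exchange_snd (x : MayaDiagram × MayaDiagram) :
    charge (exchange x).2 = charge x.2 := by
  simp [exchange, charge_zpow_shiftPerm]

lemma excess_exchange_fst (x : MayaDiagram × MayaDiagram) :
    excess (exchange x).1 = excess x.2 :=
  excess_zpow_shiftPerm _ _

lemma excess_exchange_snd (x : MayaDiagram × MayaDiagram) :
    excess (exchange x).2 = excess x.1 :=
  excess_zpow_shiftPerm _ _

lemma exchange_involutive : Function.Involutive exchange := by
  intro x
  simp only [exchange, charge_zpow_shiftPerm, ← Equiv.Perm.mul_apply, ← zpow_add]
  ext1 <;> simp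

lemma energy_add_energy_exchange (x : MayaDiagram × MayaDiagram) :
    energy (exchange x).1 + energy (exchange x).2 = energy x.1 + energy x.2 := by
  have h (p : MayaDiagram) : 2 * energy p = excess p + charge p * (charge p - 1) := by
    rw [excess]; ring
  have h1 := h (exchange x).1
  have h2 := h (exchange x).2
  rw [charge_exchange_fst, excess_exchange_fst] at h1
  rw [charge_exchange_snd, excess_exchange_snd] at h2
  linarith [h x.1, h x.2]

end MayaDiagram

section Residues

variable {m r : ℕ}

def liftResidue (m r : ℕ) (X : Finset ℕ) : Finset ℕ := X.image (m * · + r)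

def residueQuotients (m r : ℕ) (A : Finset ℕ) : Finset ℕ := {x ∈ A | x % m = r}.image (· / m)

lemma liftResidue_residueQuotients (m r : ℕ) (A : Finset ℕ) :
    liftResidue m r (residueQuotients m r A) = {x ∈ A | x % m = r} := by
  ext x
  simp only [liftResidue, residueQuotients, image_image, mem_image, mem_filter]
  constructor
  · rintro ⟨y, ⟨hy, hyr⟩, rfl⟩
    simpa [← hyr, Nat.div_add_mod] using hy
  · rintro ⟨hx, hxr⟩
    exact ⟨x, ⟨hx, hxr⟩, by simp [← hxr, Nat.div_add_mod]⟩

lemma mod_eq_of_mem_liftResidue (hr : r < m) {X : Finset ℕ} {x : ℕ}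
    (hx : x ∈ liftResidue m r X) : x % m = r := by
  obtain ⟨a, -, rfl⟩ := mem_image.1 hx
  simp [Nat.mod_eq_of_lt hr]

lemma residueQuotients_liftResidue (hr : r < m) (X : Finset ℕ) :
    residueQuotients m r (liftResidue m r X) = X := by
  have hm : 0 < m := by omega
  rw [residueQuotients, filter_true_of_mem fun x hx => mod_eq_of_mem_liftResidue hr hx,
    liftResidue, image_image]
  convert image_id (s := X)
  ext a
  simp [Nat.mul_add_div hm, Nat.div_eq_of_lt hr]

lemma residueQuotients_liftResidue_of_ne {s : ℕ} (hs : s < m) (h : r ≠ s) (X : Finset ℕ) :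
    residueQuotients m r (liftResidue m s X) = ∅ := by
  rw [residueQuotients, image_eq_empty, filter_eq_empty_iff]
  exact fun x hx => (mod_eq_of_mem_liftResidue hs hx).trans_ne h.symm

lemma residueQuotients_union (A B : Finset ℕ) :
    residueQuotients m r (A ∪ B) = residueQuotients m r A ∪ residueQuotients m r B := by
  simp only [residueQuotients, filter_union, image_union]

lemma sum_filter_mod_eq (hm : 0 < m) (A : Finset ℕ) :
    ∑ x ∈ A with x % m = r, (x : ℤ) =
      m * ∑ a ∈ residueQuotients m r A, (a : ℤ) + r * #(residueQuotients m r A) := by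
  rw [← liftResidue_residueQuotients, liftResidue,
    sum_image fun a _ b _ hab => by simpa [hm.ne'] using hab]
  push_cast
  rw [sum_add_distrib, mul_sum, sum_const, nsmul_eq_mul, mul_comm]

end Residues

namespace Regular25

open MayaDiagram

def weight (x : MayaDiagram × MayaDiagram) : ℤ :=
  10 * (energy x.1 + energy x.2) + charge x.1 + 3 * charge x.2

def toMayaPair (A : Finset ℕ) : MayaDiagram × MayaDiagram :=
  ((residueQuotients 10 1 A, residueQuotients 10 9 A),
    (residueQuotients 10 3 A, residueQuotients 10 7 A))

def ofMayaPair (x : MayaDiagram × MayaDiagram) : Finset ℕ :=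
  liftResidue 10 1 x.1.1 ∪ liftResidue 10 9 x.1.2 ∪ liftResidue 10 3 x.2.1 ∪
    liftResidue 10 7 x.2.2

lemma toMayaPair_ofMayaPair (x : MayaDiagram × MayaDiagram) : toMayaPair (ofMayaPair x) = x := by
  simp [toMayaPair, ofMayaPair, residueQuotients_union, residueQuotients_liftResidue,
    residueQuotients_liftResidue_of_ne]

lemma ofMayaPair_toMayaPair {A : Finset ℕ} (hA : ∀ a ∈ A, ¬ 2 ∣ a ∧ ¬ 5 ∣ a) :
    ofMayaPair (toMayaPair A) = A := by
  simp only [ofMayaPair, toMayaPair, liftResidue_residueQuotients, ← filter_or]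
  refine filter_true_of_mem fun a ha => ?_
  have := hA a ha
  omega

lemma not_dvd_of_mem_ofMayaPair {x : MayaDiagram × MayaDiagram} {a : ℕ}
    (ha : a ∈ ofMayaPair x) : ¬ 2 ∣ a ∧ ¬ 5 ∣ a := by
  simp only [ofMayaPair, mem_union] at ha
  rcases ha with ((ha | ha) | ha) | ha <;>
    have := mod_eq_of_mem_liftResidue (by norm_num) ha <;> omega

lemma sum_eq_weight_toMayaPair {A : Finset ℕ} (hA : ∀ a ∈ A, ¬ 2 ∣ a ∧ ¬ 5 ∣ a) :
    ∑ a ∈ A, (a : ℤ) = weight (toMayaPair A) := by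
  rw [← sum_fiberwise_of_maps_to (g := (· % 10)) (t := {1, 9, 3, 7})
    fun a ha => by have := hA a ha; simp; omega]
  simp only [sum_insert (by decide : (1 : ℕ) ∉ {9, 3, 7}),
    sum_insert (by decide : (9 : ℕ) ∉ {3, 7}), sum_insert (by decide : (3 : ℕ) ∉ {7}),
    sum_singleton, sum_filter_mod_eq (by norm_num : 0 < 10)]
  simp only [weight, toMayaPair, energy, charge, sum_add_distrib, sum_const, nsmul_eq_mul, mul_one]
  push_cast
  ring

lemma sum_ofMayaPair (x : MayaDiagram × MayaDiagram) :
    ∑ a ∈ ofMayaPair x, (a : ℤ) = weight x := by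
  rw [sum_eq_weight_toMayaPair fun a => not_dvd_of_mem_ofMayaPair, toMayaPair_ofMayaPair]

def regularFinsetEquiv (N : ℕ) :
    {A : Finset ℕ // (∀ a ∈ A, ¬ 2 ∣ a ∧ ¬ 5 ∣ a) ∧ ∑ a ∈ A, a = N} ≃
      {x : MayaDiagram × MayaDiagram // weight x = N} where
  toFun A := ⟨toMayaPair A, by rw [← sum_eq_weight_toMayaPair A.2.1, ← Nat.cast_sum, A.2.2]⟩
  invFun x := ⟨ofMayaPair x, fun _ => not_dvd_of_mem_ofMayaPair,
    Nat.cast_injective (R := ℤ) (by rw [Nat.cast_sum, sum_ofMayaPair, x.2])⟩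
  left_inv A := Subtype.ext (ofMayaPair_toMayaPair A.2.1)
  right_inv x := Subtype.ext (toMayaPair_ofMayaPair x)

lemma weight_exchange (x : MayaDiagram × MayaDiagram) : weight (exchange x) = weight x := by
  rw [weight, weight, energy_add_energy_exchange, charge_exchange_fst, charge_exchange_snd]

lemma weight_ne_of_excess_eq {x : MayaDiagram × MayaDiagram} (h : excess x.1 = excess x.2)
    (k : ℤ) : weight x ≠ 4 * k + 2 := by
  intro hw
  have key : 5 * (charge x.1 * (charge x.1 - 1) - charge x.2 * (charge x.2 - 1)) +
      20 * energy x.2 + charge x.1 + 3 * charge x.2 = 4 * k + 2 := by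
    rw [← hw, weight]
    rw [excess, excess] at h
    linear_combination -5 * h
  have mod4 : ∀ a b e k : ZMod 4,
      5 * (a * (a - 1) - b * (b - 1)) + 20 * e + a + 3 * b ≠ 4 * k + 2 := by
    decide
  have key4 := congrArg (Int.cast : ℤ → ZMod 4) key
  push_cast at key4
  exact mod4 _ _ _ _ key4

end Regular25

open MayaDiagram Regular25 in
theorem a25_4n2_even (n : ℕ) : ars 2 5 (4*n+2) % 2 = 0 := by
  rw [← Nat.even_iff, ars, Nat.card_congr ((distinctPartitionEquiv _ (by simp) _).trans
    (regularFinsetEquiv _))]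
  refine Function.Involutive.even_natCard
    (f := fun x => ⟨exchange x, (weight_exchange x).trans x.2⟩)
    (fun x => Subtype.ext (exchange_involutive x)) ?_
  rintro ⟨x, hx⟩ hfix
  have hfix : exchange x = x := congrArg Subtype.val hfix
  have hexcess : excess x.1 = excess x.2 := by rw [← excess_exchange_fst, hfix]
  exact weight_ne_of_excess_eq hexcess n (by rw [hx]; push_cast; ring)
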